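/- arXiv:2511.21204 — 3 statements merged into one kernel-verified Lean document; each statement's English description precedes it below -/
import Mathlib

section
/- Let X be a Polish space, π a probability measure on the infinite simplex 𝐓 = {(a_i) ∈ [0,1]^ℕ : a_{i+1} ≤ a_i, ∑_i a_i = 1}, and ν an atomless probability measure on X. Define em(𝐚,𝐱) = ∑_i a_i δ_{x_i} and Q_{π,ν} = em_♯(π ⊗ ν^⊗ℕ), a probability measure on the space P(X) of probability measures on X. Then the barycenter of Q_{π,ν} equals ν: for every Borel function f : X → [0,1], ∫_{P(X)} ∫_X f(x) dμ(x) dQ_{π,ν}(μ) = ∫_X f dν. -/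
open MeasureTheory
open scoped ENNReal

/-- The infinite simplex `𝐓` of non-increasing sequences of weights in `[0,1]`
summing to `1` (weights are taken in `ℝ≥0∞`; every entry is automatically `≤ 1`). -/
abbrev InfSimplex : Type :=
  {a : ℕ → ℝ≥0∞ // (∀ i, a (i + 1) ≤ a i) ∧ ∑' i, a i = 1}

/-- The barycenter of the reference measure `Q_{π,ν} = em_♯(π ⊗ ν^⊗ℕ)` equals `ν`:
for every Borel `f : X → [0,1]`,
`∫_{P(X)} ∫_X f dμ dQ_{π,ν}(μ) = ∫_X f dν`. -/
theorem barycenter_of_reference_measure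
    {X : Type*} [TopologicalSpace X] [PolishSpace X] [MeasurableSpace X] [BorelSpace X]
    (π : Measure InfSimplex) [IsProbabilityMeasure π]
    (ν : Measure X) [IsProbabilityMeasure ν] (hν : ∀ x : X, ν {x} = 0)
    (νInf : Measure (ℕ → X)) [IsProbabilityMeasure νInf]
    (hprod : ∀ n : ℕ,
      νInf.map (fun x (i : Fin n) => x i) = Measure.pi (fun _ : Fin n => ν))
    (em : InfSimplex × (ℕ → X) → Measure X)
    (hem : ∀ p, em p = Measure.sum (fun i => p.1.1 i • Measure.dirac (p.2 i)))
    (Q : Measure (Measure X)) (hQ : Q = (π.prod νInf).map em)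
    (f : X → ℝ≥0∞) (hf : Measurable f) (hf1 : ∀ x, f x ≤ 1) :
    ∫⁻ μ, (∫⁻ x, f x ∂μ) ∂Q = ∫⁻ x, f x ∂ν := by

  -- measurability of `em`
  have hem_meas : Measurable em := by
    apply Measure.measurable_of_measurable_coe
    intro s hs
    simp only [hem, Measure.sum_apply _ hs, Measure.smul_apply, smul_eq_mul,
      Measure.dirac_apply' _ hs]
    refine Measurable.ennreal_tsum fun i => Measurable.mul ?_ ?_
    · exact (measurable_pi_apply i).comp (measurable_subtype_coe.comp measurable_fst)
    · exact (measurable_one.indicator hs).comp ((measurable_pi_apply i).comp measurable_snd)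
  have hF : Measurable fun μ : Measure X => ∫⁻ x, f x ∂μ :=
    Measure.measurable_lintegral hf
  have hev : ∀ i : ℕ, Measurable fun x : ℕ → X => x i := fun i => measurable_pi_apply i
  have hco : ∀ i : ℕ, Measurable fun a : InfSimplex => a.1 i :=
    fun i => (measurable_pi_apply i).comp measurable_subtype_coe
  -- marginals of νInf
  have hmarg : ∀ i : ℕ, νInf.map (fun x => x i) = ν := by
    intro i
    have h := hprod (i + 1)
    have hk : νInf.map (fun x => x i) =
        (νInf.map (fun x (j : Fin (i + 1)) => x (j : ℕ))).map
          (Function.eval (⟨i, Nat.lt_succ_self i⟩ : Fin (i + 1))) :=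
      (Measure.map_map (g := Function.eval (⟨i, Nat.lt_succ_self i⟩ : Fin (i + 1)))
        (f := fun (x : ℕ → X) (j : Fin (i + 1)) => x (j : ℕ))
        (measurable_pi_apply _)
        (measurable_pi_lambda _ fun j => measurable_pi_apply _)).symm
    rw [hk, h]
    ext s hs
    rw [Measure.map_apply (measurable_pi_apply _) hs, Set.eval_preimage, Measure.pi_pi]
    simp [Function.update_apply, apply_ite ν, measure_univ]
  calc ∫⁻ μ, (∫⁻ x, f x ∂μ) ∂Q
      = ∫⁻ p, (∫⁻ x, f x ∂(em p)) ∂(π.prod νInf) := by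
        rw [hQ, lintegral_map hF hem_meas]
    _ = ∫⁻ p : InfSimplex × (ℕ → X), ∑' i, p.1.1 i * f (p.2 i) ∂(π.prod νInf) := by
        refine lintegral_congr fun p => ?_
        rw [hem, lintegral_sum_measure]
        refine tsum_congr fun i => ?_
        rw [lintegral_smul_measure, lintegral_dirac' _ hf, smul_eq_mul]
    _ = ∑' i, ∫⁻ p : InfSimplex × (ℕ → X), p.1.1 i * f (p.2 i) ∂(π.prod νInf) := by
        refine lintegral_tsum fun i => ?_
        exact (((hco i).comp measurable_fst).mul
          ((hf.comp (hev i)).comp measurable_snd)).aemeasurable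
    _ = ∑' i, (∫⁻ a : InfSimplex, a.1 i ∂π) * ∫⁻ x, f (x i) ∂νInf := by
        refine tsum_congr fun i => ?_
        exact lintegral_prod_mul (hco i).aemeasurable (hf.comp (hev i)).aemeasurable
    _ = ∑' i, (∫⁻ a : InfSimplex, a.1 i ∂π) * ∫⁻ x, f x ∂ν := by
        refine tsum_congr fun i => ?_
        rw [← hmarg i, lintegral_map hf (hev i)]
    _ = ∫⁻ x, f x ∂ν := by
        rw [ENNReal.tsum_mul_right,
          ← lintegral_tsum fun i => (hco i).aemeasurable]
        have : ∫⁻ a : InfSimplex, (∑' i, a.1 i) ∂π = 1 := by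
          rw [lintegral_congr fun a => a.2.2, lintegral_one, measure_univ]
        rw [this, one_mul]
end

section
/- With the setup of the reference measure Q_{π,ν} = em_♯(π ⊗ ν^⊗ℕ), where ν is atomless, set c₁ = ∫_𝐓 (∑_{i≠j} a_i a_j) dπ(𝐚) and c₂ = ∫_𝐓 (∑_{i=1}^∞ a_i²) dπ(𝐚). Then for every Borel function g : X × X → [0,1], ∫_{P(X)} ∫_{X×X} g(x,y) d(μ⊗μ)(x,y) dQ_{π,ν}(μ) = c₁ ∫_{X×X} g d(ν⊗ν) + c₂ ∫_X g(x,x) dν(x). -/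
open MeasureTheory
open scoped ENNReal ProbabilityTheory

/-- Splitting a double sum into its off-diagonal and diagonal parts. -/
lemma aux_double_sum_split (w : ℕ → ℝ≥0∞) (C D : ℝ≥0∞) :
    ∑' i, ∑' j, (w i * w j) * (if i = j then D else C)
      = (∑' i, ∑' j, if i = j then 0 else w i * w j) * C + (∑' i, w i ^ 2) * D := by
  have h : ∀ i j : ℕ, (w i * w j) * (if i = j then D else C)
      = (if i = j then 0 else w i * w j) * C + (if i = j then w i * w j else 0) * D := by
    intro i j
    by_cases hij : i = j <;> simp [hij]
  calc ∑' i, ∑' j, (w i * w j) * (if i = j then D else C)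
      = ∑' i, ((∑' j, (if i = j then 0 else w i * w j) * C)
          + ∑' j, (if i = j then w i * w j else 0) * D) := by
        refine tsum_congr fun i => ?_
        rw [← ENNReal.tsum_add]
        exact tsum_congr fun j => h i j
    _ = (∑' i, ∑' j, (if i = j then 0 else w i * w j)) * C
          + (∑' i, ∑' j, (if i = j then w i * w j else 0)) * D := by
        rw [ENNReal.tsum_add]
        simp_rw [ENNReal.tsum_mul_right]
    _ = _ := by
        congr 1
        refine congrArg (· * D) (tsum_congr fun i => ?_)
        have h2 : (fun j => if i = j then w i * w j else 0)
            = fun j => if j = i then w i * w i else 0 := by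
          funext j
          by_cases hij : j = i
          · simp [hij]
          · rw [if_neg (fun h => hij h.symm), if_neg hij]
        rw [h2, tsum_ite_eq, ← pow_two]

/-- The pushforward of a finite product of copies of `ν` under a coordinate evaluation
is `ν`. -/
lemma aux_pi_map_eval {X : Type*} [MeasurableSpace X] (ν : Measure X) [IsProbabilityMeasure ν]
    {n : ℕ} (i : Fin n) :
    (Measure.pi fun _ : Fin n => ν).map (fun v => v i) = ν := by
  classical
  ext s hs
  rw [Measure.map_apply (measurable_pi_apply i) hs]
  have hset : (fun v : Fin n → X => v i) ⁻¹' s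
      = Set.pi Set.univ (fun k => if k = i then s else Set.univ) := by
    ext v
    simp only [Set.mem_preimage, Set.mem_pi, Set.mem_univ, forall_true_left]
    constructor
    · intro hv k
      by_cases hki : k = i
      · subst hki; simpa using hv
      · simp [hki]
    · intro hv
      have := hv i; simpa using this
  rw [hset, Measure.pi_pi]
  have hval : ∀ k : Fin n, ν (if k = i then s else Set.univ)
      = (if k = i then ν s else 1) := by
    intro k; by_cases hki : k = i <;> simp [hki]
  rw [Finset.prod_congr rfl fun k _ => hval k,
    Finset.prod_ite_eq' Finset.univ i (fun _ => ν s)]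
  simp

/-- The pushforward of a finite product of copies of `ν` under two distinct
coordinate evaluations is `ν ⊗ ν`. -/
lemma aux_pi_map_pair {X : Type*} [MeasurableSpace X] (ν : Measure X) [IsProbabilityMeasure ν]
    {n : ℕ} (i j : Fin n) (hij : i ≠ j) :
    (Measure.pi fun _ : Fin n => ν).map (fun v => (v i, v j)) = ν.prod ν := by
  classical
  refine (Measure.prod_eq fun s t hs ht => ?_).symm
  rw [Measure.map_apply ((measurable_pi_apply i).prodMk (measurable_pi_apply j)) (hs.prod ht)]
  have hset : (fun v : Fin n → X => (v i, v j)) ⁻¹' (s ×ˢ t)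
      = Set.pi Set.univ (fun k => if k = i then s else if k = j then t else Set.univ) := by
    ext v
    simp only [Set.mem_preimage, Set.mem_prod, Set.mem_pi, Set.mem_univ, forall_true_left]
    constructor
    · intro hv k
      by_cases hki : k = i
      · subst hki; simpa [hij] using hv.1
      · by_cases hkj : k = j
        · subst hkj; simp [hki, hv.2]
        · simp [hki, hkj]
    · intro hv
      refine ⟨?_, ?_⟩
      · have := hv i; simpa using this
      · have := hv j
        simpa [(show ¬ j = i from fun h => hij h.symm)] using this
  rw [hset, Measure.pi_pi]
  have hval : ∀ k : Fin n, ν (if k = i then s else if k = j then t else Set.univ)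
      = (if k = i then ν s else 1) * (if k = j then ν t else 1) := by
    intro k
    by_cases hki : k = i
    · subst hki
      simp [(show ¬ (k : Fin n) = j from fun h => hij h)]
    · by_cases hkj : k = j
      · subst hkj; simp [hki]
      · simp [hki, hkj]
  rw [Finset.prod_congr rfl fun k _ => hval k, Finset.prod_mul_distrib,
    Finset.prod_ite_eq' Finset.univ i (fun _ => ν s),
    Finset.prod_ite_eq' Finset.univ j (fun _ => ν t)]
  simp

/-- For the reference measure `Q_{π,ν} = em_♯(π ⊗ ν^⊗ℕ)` with `ν` atomless, with
`c₁ = ∫_𝐓 ∑_{i≠j} aᵢaⱼ dπ` and `c₂ = ∫_𝐓 ∑_i aᵢ² dπ`, one has, for every Borel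
`g : X × X → [0,1]`,
`∫ ∫ g d(μ⊗μ) dQ(μ) = c₁ ∫ g d(ν⊗ν) + c₂ ∫ g(x,x) dν(x)`. -/
theorem second_moment_of_reference_measure
    {X : Type*} [TopologicalSpace X] [PolishSpace X] [MeasurableSpace X] [BorelSpace X]
    (π : Measure InfSimplex) [IsProbabilityMeasure π]
    (ν : Measure X) [IsProbabilityMeasure ν] (hν : ∀ x : X, ν {x} = 0)
    (νInf : Measure (ℕ → X)) [IsProbabilityMeasure νInf]
    (hprod : ∀ n : ℕ,
      νInf.map (fun x (i : Fin n) => x i) = Measure.pi (fun _ : Fin n => ν))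
    (em : InfSimplex × (ℕ → X) → Measure X)
    (hem : ∀ p, em p = Measure.sum (fun i => p.1.1 i • Measure.dirac (p.2 i)))
    (Q : Measure (Measure X)) (hQ : Q = (π.prod νInf).map em)
    (c₁ c₂ : ℝ≥0∞)
    (hc₁ : c₁ = ∫⁻ a, (∑' i, ∑' j, if i = j then 0 else a.1 i * a.1 j) ∂π)
    (hc₂ : c₂ = ∫⁻ a, (∑' i, (a.1 i) ^ 2) ∂π)
    (g : X × X → ℝ≥0∞) (hg : Measurable g) (hg1 : ∀ p, g p ≤ 1) :
    ∫⁻ μ, (∫⁻ p, g p ∂(μ.prod μ)) ∂Q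
      = c₁ * ∫⁻ p, g p ∂(ν.prod ν) + c₂ * ∫⁻ x, g (x, x) ∂ν := by
  classical
  set C := ∫⁻ p, g p ∂(ν.prod ν) with hC
  set D := ∫⁻ x, g (x, x) ∂ν with hD
  -- basic measurability
  have hw_meas : ∀ i, Measurable fun p : InfSimplex × (ℕ → X) => p.1.1 i := fun i =>
    (measurable_pi_apply i).comp (measurable_subtype_coe.comp measurable_fst)
  have hx_meas : ∀ i, Measurable fun p : InfSimplex × (ℕ → X) => p.2 i := fun i =>
    (measurable_pi_apply i).comp measurable_snd
  have hwa_meas : ∀ i, Measurable fun a : InfSimplex => a.1 i := fun i =>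
    (measurable_pi_apply i).comp measurable_subtype_coe
  have hem_meas : Measurable em := by
    apply Measure.measurable_of_measurable_coe
    intro s hs
    have h1 : (fun p => em p s) = fun p => ∑' i, p.1.1 i * Set.indicator s 1 (p.2 i) := by
      funext p
      rw [hem p, Measure.sum_apply _ hs]
      refine tsum_congr fun i => ?_
      rw [Measure.smul_apply, smul_eq_mul, Measure.dirac_apply' _ hs]
    rw [h1]
    exact Measurable.ennreal_tsum fun i =>
      (hw_meas i).mul ((measurable_const.indicator hs).comp (hx_meas i))
  have hem_univ : ∀ p, em p Set.univ = 1 := by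
    intro p
    rw [hem p, Measure.sum_apply _ MeasurableSet.univ]
    simp only [Measure.smul_apply, smul_eq_mul, measure_univ, mul_one]
    exact p.1.2.2
  have hem_prob : ∀ p, IsProbabilityMeasure (em p) := fun p => ⟨hem_univ p⟩
  -- the measurable set of probability-normalized measures
  set S : Set (Measure X) := {μ | μ Set.univ = 1} with hS_def
  have hS : MeasurableSet S :=
    (Measure.measurable_coe MeasurableSet.univ) (measurableSet_singleton 1)
  -- the identity kernel on S
  let κ : ProbabilityTheory.Kernel S X := ⟨Subtype.val, measurable_subtype_coe⟩
  haveI : ProbabilityTheory.IsMarkovKernel κ := ⟨fun μ => ⟨μ.2⟩⟩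
  let H0 : S → ℝ≥0∞ := fun μ => ∫⁻ z, g z ∂((κ ×ₖ κ) μ)
  have hH0 : Measurable H0 :=
    Measurable.lintegral_kernel_prod_right' (hg.comp measurable_snd)
  let H : Measure X → ℝ≥0∞ := Function.extend Subtype.val H0 0
  have hH : Measurable H :=
    (MeasurableEmbedding.subtype_coe hS).measurable_extend hH0 measurable_const
  have hHS : ∀ μ, ∀ h : μ ∈ S, H μ = ∫⁻ z, g z ∂(μ.prod μ) := by
    intro μ h
    have h1 : H μ = H0 ⟨μ, h⟩ := Subtype.val_injective.extend_apply H0 0 ⟨μ, h⟩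
    rw [h1]
    show ∫⁻ z, g z ∂((κ ×ₖ κ) ⟨μ, h⟩) = _
    rw [ProbabilityTheory.Kernel.prod_apply]
    rfl
  -- coordinate integrals
  have hdiag : ∀ i : ℕ, ∫⁻ x, g (x i, x i) ∂νInf = D := by
    intro i
    have hmap : νInf.map (fun x : ℕ → X => x i) = ν := by
      have hco : (fun x : ℕ → X => x i)
          = (fun v : Fin (i + 1) → X => v ⟨i, Nat.lt_succ_self i⟩)
            ∘ (fun x (k : Fin (i + 1)) => x k) := rfl
      have hres : Measurable fun (x : ℕ → X) (k : Fin (i + 1)) => x (k : ℕ) :=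
        measurable_pi_lambda _ fun k => measurable_pi_apply _
      have hmm := Measure.map_map (μ := νInf)
        (g := fun v : Fin (i + 1) → X => v ⟨i, Nat.lt_succ_self i⟩)
        (f := fun (x : ℕ → X) (k : Fin (i + 1)) => x (k : ℕ))
        (measurable_pi_apply _) hres
      rw [hco, ← hmm, hprod (i + 1), aux_pi_map_eval]
    rw [hD, ← hmap]
    exact (lintegral_map (f := fun y : X => g (y, y))
      (hg.comp (measurable_id.prodMk measurable_id)) (measurable_pi_apply i)).symm
  have hoff : ∀ i j : ℕ, i ≠ j → ∫⁻ x, g (x i, x j) ∂νInf = C := by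
    intro i j hij
    set n := max i j + 1 with hn
    have hi : i < n := Nat.lt_succ_of_le (le_max_left i j)
    have hj : j < n := Nat.lt_succ_of_le (le_max_right i j)
    have hij' : (⟨i, hi⟩ : Fin n) ≠ ⟨j, hj⟩ := fun h => hij (congrArg Fin.val h)
    have hmap : νInf.map (fun x : ℕ → X => (x i, x j)) = ν.prod ν := by
      have hco : (fun x : ℕ → X => (x i, x j))
          = (fun v : Fin n → X => (v ⟨i, hi⟩, v ⟨j, hj⟩))
            ∘ (fun x (k : Fin n) => x k) := rfl
      have hres : Measurable fun (x : ℕ → X) (k : Fin n) => x (k : ℕ) :=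
        measurable_pi_lambda _ fun k => measurable_pi_apply _
      have hmm := Measure.map_map (μ := νInf)
        (g := fun v : Fin n → X => (v ⟨i, hi⟩, v ⟨j, hj⟩))
        (f := fun (x : ℕ → X) (k : Fin n) => x (k : ℕ))
        (by fun_prop) hres
      rw [hco, ← hmm, hprod n, aux_pi_map_pair ν _ _ hij']
    rw [hC, ← hmap]
    exact (lintegral_map hg
      ((measurable_pi_apply i).prodMk (measurable_pi_apply j))).symm
  -- almost-everywhere identification of the integrand with H
  have hQae : ∀ᵐ μ ∂Q, (∫⁻ p, g p ∂(μ.prod μ)) = H μ := by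
    have hQS : Q Sᶜ = 0 := by
      rw [hQ, Measure.map_apply hem_meas hS.compl]
      have hpre : em ⁻¹' Sᶜ = ∅ := by
        ext p
        simp [hS_def, hem_univ p]
      rw [hpre]
      simp
    refine Filter.eventually_of_mem ((MeasureTheory.mem_ae_iff).2 ?_) fun μ h => (hHS μ h).symm
    simpa using hQS
  -- the main computation
  calc ∫⁻ μ, (∫⁻ p, g p ∂(μ.prod μ)) ∂Q
      = ∫⁻ μ, H μ ∂Q := lintegral_congr_ae hQae
    _ = ∫⁻ p, H (em p) ∂(π.prod νInf) := by
        rw [hQ]; exact lintegral_map hH hem_meas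
    _ = ∫⁻ p, ∑' i, p.1.1 i * ∑' j, p.1.1 j * g (p.2 i, p.2 j) ∂(π.prod νInf) := by
        refine lintegral_congr fun p => ?_
        rw [hHS (em p) (hem_univ p)]
        haveI := hem_prob p
        rw [lintegral_prod _ hg.aemeasurable]
        have hinner : ∀ x : X, (∫⁻ y, g (x, y) ∂(em p)) = ∑' j, p.1.1 j * g (x, p.2 j) := by
          intro x
          rw [hem p, lintegral_sum_measure]
          refine tsum_congr fun j => ?_
          rw [lintegral_smul_measure, lintegral_dirac, smul_eq_mul]
        simp_rw [hinner]
        rw [hem p, lintegral_sum_measure]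
        refine tsum_congr fun i => ?_
        rw [lintegral_smul_measure, lintegral_dirac, smul_eq_mul]
    _ = ∫⁻ a, (∫⁻ x, ∑' i, a.1 i * ∑' j, a.1 j * g (x i, x j) ∂νInf) ∂π := by
        rw [lintegral_prod]
        exact (Measurable.ennreal_tsum fun i => (hw_meas i).mul
          (Measurable.ennreal_tsum fun j => (hw_meas j).mul
            (hg.comp ((hx_meas i).prodMk (hx_meas j))))).aemeasurable
    _ = ∫⁻ a, ((∑' i, ∑' j, if i = j then 0 else a.1 i * a.1 j) * C
          + (∑' i, a.1 i ^ 2) * D) ∂π := by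
        refine lintegral_congr fun a => ?_
        have hgij : ∀ i j : ℕ, Measurable fun x : ℕ → X => g (x i, x j) := fun i j =>
          hg.comp ((measurable_pi_apply i).prodMk (measurable_pi_apply j))
        have hmeas1 : ∀ i : ℕ, Measurable fun x : ℕ → X =>
            a.1 i * ∑' j, a.1 j * g (x i, x j) := fun i =>
          (Measurable.ennreal_tsum fun j => measurable_const.mul
            (hg.comp ((measurable_pi_apply i).prodMk (measurable_pi_apply j)))).const_mul _
        rw [lintegral_tsum fun i => (hmeas1 i).aemeasurable]
        have hstep : ∀ i : ℕ, (∫⁻ x, a.1 i * ∑' j, a.1 j * g (x i, x j) ∂νInf)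
            = ∑' j, (a.1 i * a.1 j) * (if i = j then D else C) := by
          intro i
          have hsum : Measurable fun x : ℕ → X => ∑' j, a.1 j * g (x i, x j) :=
            Measurable.ennreal_tsum fun j => (hgij i j).const_mul _
          rw [lintegral_const_mul _ hsum]
          rw [lintegral_tsum fun j => ((hgij i j).const_mul (a.1 j)).aemeasurable]
          rw [← ENNReal.tsum_mul_left]
          refine tsum_congr fun j => ?_
          rw [lintegral_const_mul _ (hgij i j), ← mul_assoc]
          congr 1
          by_cases hij : i = j
          · subst hij; rw [if_pos rfl, hdiag i]
          · rw [if_neg hij, hoff i j hij]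
        rw [tsum_congr hstep, aux_double_sum_split]
    _ = c₁ * C + c₂ * D := by
        have hA : Measurable fun a : InfSimplex =>
            ∑' i, ∑' j, if i = j then 0 else a.1 i * a.1 j := by
          refine Measurable.ennreal_tsum fun i => Measurable.ennreal_tsum fun j => ?_
          by_cases hij : i = j
          · simp [hij]
          · have hm : Measurable fun a : InfSimplex => a.1 i * a.1 j := (hwa_meas i).mul (hwa_meas j)
            simpa [hij] using hm
        have hB : Measurable fun a : InfSimplex => ∑' i, a.1 i ^ 2 :=
          Measurable.ennreal_tsum fun i => (hwa_meas i).pow_const 2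
        rw [lintegral_add_left (hA.mul_const C), lintegral_mul_const _ hA,
          lintegral_mul_const _ hB, hc₁, hc₂]
end

section
/- Suppose (ν⊗ν)(Δ_ε) ≤ C ε^{r̃} for some constants C > 0, r̃ ≥ 1 and all ε > 0, where ν is a probability measure on ℝ^d. Then for every 1 ≤ r < r̃, cap_{r,ν}(Δ) = 0, where cap_{r,ν}(Δ) = inf{∫_{ℝ^{2d}} |h|^r + |∇h|^r d(ν⊗ν) : h ∈ C¹_b(ℝ^{2d}), h = 1 on Δ, h ≤ 1}. -/
open MeasureTheory
open scoped ENNReal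

section aux
open Filter

lemma transition_deriv_bound :
    ∃ K : ℝ, 0 ≤ K ∧ ∀ t, |deriv Real.smoothTransition t| ≤ K := by
  have hsm : ContDiff ℝ 1 Real.smoothTransition := Real.smoothTransition.contDiff
  have hc : Continuous (deriv Real.smoothTransition) := hsm.continuous_deriv le_rfl
  obtain ⟨K, hK⟩ := (isCompact_Icc (a := (0:ℝ)) (b := 1)).exists_bound_of_continuousOn
    hc.continuousOn
  refine ⟨max K 0, le_max_right _ _, fun t => ?_⟩
  rcases le_or_gt t 1 with h1 | h1
  · rcases le_or_gt 0 t with h0 | h0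
    · exact le_trans (by simpa using hK t ⟨h0, h1⟩) (le_max_left _ _)
    · have : deriv Real.smoothTransition t = 0 := by
        have hev : Real.smoothTransition =ᶠ[nhds t] fun _ => (0:ℝ) := by
          filter_upwards [Iio_mem_nhds h0] with s hs
          exact Real.smoothTransition.zero_of_nonpos (le_of_lt hs)
        rw [hev.deriv_eq, deriv_const]
      simp [this, le_max_right]
  · have : deriv Real.smoothTransition t = 0 := by
      have hev : Real.smoothTransition =ᶠ[nhds t] fun _ => (1:ℝ) := by
        filter_upwards [Ioi_mem_nhds h1] with s hs
        exact Real.smoothTransition.one_of_one_le (le_of_lt hs)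
      rw [hev.deriv_eq, deriv_const]
    simp [this, le_max_right]

variable {d : ℕ}

noncomputable def cutoff (ε : ℝ) (p : EuclideanSpace ℝ (Fin d) × EuclideanSpace ℝ (Fin d)) : ℝ :=
  Real.smoothTransition ((8*ε^2)⁻¹ * (9*ε^2 - ‖p.1 - p.2‖^2))

lemma cutoff_contDiff (ε : ℝ) : ContDiff ℝ 1 (cutoff (d := d) ε) := by
  apply (Real.smoothTransition.contDiff (n := 1)).comp
  exact contDiff_const.mul (contDiff_const.sub ((contDiff_fst.sub contDiff_snd).norm_sq ℝ))

lemma cutoff_le_one (ε : ℝ) (p) : cutoff (d := d) ε p ≤ 1 := Real.smoothTransition.le_one _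

lemma cutoff_nonneg (ε : ℝ) (p) : 0 ≤ cutoff (d := d) ε p := Real.smoothTransition.nonneg _

lemma cutoff_diag (ε : ℝ) (hε : 0 < ε) (x : EuclideanSpace ℝ (Fin d)) :
    cutoff ε (x, x) = 1 := by
  apply Real.smoothTransition.one_of_one_le
  have : (8*ε^2)⁻¹ * (9*ε^2 - ‖x - x‖^2) = 9/8 := by
    field_simp
    simp
  rw [this]; norm_num

lemma cutoff_zero (ε : ℝ) (hε : 0 < ε) (p) (hp : 3*ε ≤ dist p.1 p.2) :
    cutoff (d := d) ε p = 0 := by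
  apply Real.smoothTransition.zero_of_nonpos
  have h1 : 9*ε^2 ≤ ‖p.1 - p.2‖^2 := by
    have := dist_eq_norm p.1 p.2
    nlinarith [hp, hε]
  have h2 : (0:ℝ) < (8*ε^2)⁻¹ := by positivity
  nlinarith

lemma cutoff_hasFDerivAt (ε : ℝ) (p) :
    HasFDerivAt (cutoff (d := d) ε)
      ((deriv Real.smoothTransition ((8*ε^2)⁻¹ * (9*ε^2 - ‖p.1 - p.2‖^2))) •
        ((8*ε^2)⁻¹ • ((0 : _ →L[ℝ] ℝ) - (2 • (innerSL ℝ (p.1 - p.2)).comp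
          (ContinuousLinearMap.fst ℝ _ _ - ContinuousLinearMap.snd ℝ _ _))))) p := by
  have hL : HasFDerivAt (fun q : EuclideanSpace ℝ (Fin d) × EuclideanSpace ℝ (Fin d) => q.1 - q.2)
      (ContinuousLinearMap.fst ℝ _ _ - ContinuousLinearMap.snd ℝ _ _) p :=
    (hasFDerivAt_fst.sub hasFDerivAt_snd)
  have hu : HasFDerivAt (fun q : EuclideanSpace ℝ (Fin d) × EuclideanSpace ℝ (Fin d) => ‖q.1 - q.2‖^2)
      (2 • (innerSL ℝ (p.1 - p.2)).comp
        (ContinuousLinearMap.fst ℝ _ _ - ContinuousLinearMap.snd ℝ _ _)) p := hL.norm_sq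
  have hg := ((hasFDerivAt_const (9*ε^2) p).sub hu).const_mul ((8*ε^2)⁻¹)
  have hφ : HasDerivAt Real.smoothTransition
      (deriv Real.smoothTransition ((8*ε^2)⁻¹ * (9*ε^2 - ‖p.1 - p.2‖^2)))
      ((8*ε^2)⁻¹ * (9*ε^2 - ‖p.1 - p.2‖^2)) :=
    ((Real.smoothTransition.contDiff (n := 1)).differentiable (by norm_num) _).hasDerivAt
  exact hφ.comp_hasFDerivAt p hg

lemma sub_clm_norm_le :
    ‖(ContinuousLinearMap.fst ℝ (EuclideanSpace ℝ (Fin d)) (EuclideanSpace ℝ (Fin d))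
      - ContinuousLinearMap.snd ℝ _ _)‖ ≤ 2 := by
  apply ContinuousLinearMap.opNorm_le_bound _ (by norm_num)
  intro v
  have h1 : ‖v.1‖ ≤ ‖v‖ := norm_fst_le v
  have h2 : ‖v.2‖ ≤ ‖v‖ := norm_snd_le v
  calc ‖v.1 - v.2‖ ≤ ‖v.1‖ + ‖v.2‖ := norm_sub_le _ _
    _ ≤ 2 * ‖v‖ := by linarith

lemma cutoff_fderiv_norm_le (ε K : ℝ) (hε : 0 < ε)
    (hK : ∀ t, |deriv Real.smoothTransition t| ≤ K) (p) :
    ‖fderiv ℝ (cutoff (d := d) ε) p‖ ≤ K * ‖p.1 - p.2‖ / (2*ε^2) := by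
  rw [(cutoff_hasFDerivAt ε p).fderiv]
  have hK0 : 0 ≤ K := le_trans (abs_nonneg _) (hK 0)
  rw [norm_smul, norm_smul, zero_sub, norm_neg]
  set T := (innerSL ℝ (p.1 - p.2)).comp
      (ContinuousLinearMap.fst ℝ (EuclideanSpace ℝ (Fin d)) (EuclideanSpace ℝ (Fin d))
        - ContinuousLinearMap.snd ℝ _ _) with hT
  have hTle : ‖T‖ ≤ ‖p.1 - p.2‖ * 2 := by
    calc ‖T‖ ≤ ‖innerSL ℝ (p.1 - p.2)‖ * ‖_‖ := ContinuousLinearMap.opNorm_comp_le _ _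
      _ ≤ ‖p.1 - p.2‖ * 2 := by
          rw [innerSL_apply_norm]
          exact mul_le_mul_of_nonneg_left sub_clm_norm_le (norm_nonneg _)
  have hU : ‖(2 • T : _ →L[ℝ] ℝ)‖ ≤ 2 * (‖p.1 - p.2‖ * 2) := by
    rw [two_smul]
    calc ‖T + T‖ ≤ ‖T‖ + ‖T‖ := norm_add_le _ _
      _ ≤ 2 * (‖p.1 - p.2‖ * 2) := by linarith
  have h8 : ‖(8*ε^2)⁻¹‖ = (8*ε^2)⁻¹ := by
    rw [Real.norm_eq_abs, abs_of_pos (by positivity)]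
  have hKd : ‖deriv Real.smoothTransition ((8 * ε ^ 2)⁻¹ * (9 * ε ^ 2 - ‖p.1 - p.2‖ ^ 2))‖ ≤ K :=
    hK _
  calc ‖deriv Real.smoothTransition ((8 * ε ^ 2)⁻¹ * (9 * ε ^ 2 - ‖p.1 - p.2‖ ^ 2))‖ *
        (‖(8 * ε ^ 2)⁻¹‖ * ‖(2 • T : _ →L[ℝ] ℝ)‖)
      ≤ K * ((8*ε^2)⁻¹ * (2 * (‖p.1 - p.2‖ * 2))) := by
        apply mul_le_mul hKd _ (by positivity) hK0
        rw [h8]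
        exact mul_le_mul_of_nonneg_left hU (by positivity)
    _ = K * ‖p.1 - p.2‖ / (2*ε^2) := by field_simp; ring

lemma cutoff_fderiv_zero (ε : ℝ) (hε : 0 < ε) (p) (hp : 3*ε < dist p.1 p.2) :
    fderiv ℝ (cutoff (d := d) ε) p = 0 := by
  have hopen : IsOpen {q : EuclideanSpace ℝ (Fin d) × EuclideanSpace ℝ (Fin d) |
      3*ε < dist q.1 q.2} :=
    isOpen_lt continuous_const ((continuous_fst.dist continuous_snd))
  have hev : (cutoff (d := d) ε) =ᶠ[nhds p] fun _ => (0:ℝ) := by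
    filter_upwards [hopen.mem_nhds hp] with q hq
    exact cutoff_zero ε hε q (le_of_lt hq)
  rw [hev.fderiv_eq, fderiv_fun_const]
  rfl

/-- Global gradient bound for the cutoff. -/
lemma cutoff_fderiv_global (ε K : ℝ) (hε : 0 < ε)
    (hK : ∀ t, |deriv Real.smoothTransition t| ≤ K) (p) :
    ‖fderiv ℝ (cutoff (d := d) ε) p‖ ≤ 3*K/(2*ε) := by
  have hK0 : 0 ≤ K := le_trans (abs_nonneg _) (hK 0)
  rcases le_or_gt (dist p.1 p.2) (3*ε) with hd | hd
  · refine le_trans (cutoff_fderiv_norm_le ε K hε hK p) ?_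
    rw [dist_eq_norm] at hd
    rw [div_le_div_iff₀ (by positivity) (by positivity)]
    nlinarith [mul_le_mul_of_nonneg_left hd hK0, hε, norm_nonneg (p.1 - p.2)]
  · rw [cutoff_fderiv_zero ε hε p hd]
    simp
    positivity

end aux

/-- The set of admissible energies for the `r`-capacity of the diagonal with respect to
`ν ⊗ ν`: energies `∫ |h|^r + |∇h|^r d(ν⊗ν)` of bounded `C¹` functions `h` with bounded
gradient, `h = 1` on the diagonal and `h ≤ 1`.  The capacity is the infimum of this set. -/
def capacitySet {d : ℕ} (r : ℝ) (ν : Measure (EuclideanSpace ℝ (Fin d))) : Set ℝ≥0∞ :=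
  {c | ∃ h : EuclideanSpace ℝ (Fin d) × EuclideanSpace ℝ (Fin d) → ℝ,
      ContDiff ℝ 1 h
      ∧ (∃ B : ℝ, ∀ p, |h p| ≤ B ∧ ‖fderiv ℝ h p‖ ≤ B)
      ∧ (∀ x : EuclideanSpace ℝ (Fin d), h (x, x) = 1)
      ∧ (∀ p, h p ≤ 1)
      ∧ c = ∫⁻ p, (ENNReal.ofReal (|h p| ^ r)
              + ENNReal.ofReal (‖fderiv ℝ h p‖ ^ r)) ∂(ν.prod ν)}

/-- If `(ν⊗ν)(Δ_ε) ≤ C ε^{r̃}` for all `ε > 0`, then `cap_{r,ν}(Δ) = 0` for every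
`1 ≤ r < r̃`. -/
theorem capacity_diagonal_zero_of_strip_bound
    {d : ℕ} (ν : Measure (EuclideanSpace ℝ (Fin d))) [IsProbabilityMeasure ν]
    (C rt : ℝ) (hC : 0 < C) (hrt : 1 ≤ rt)
    (hstrip : ∀ ε : ℝ, 0 < ε →
      (ν.prod ν) {p : EuclideanSpace ℝ (Fin d) × EuclideanSpace ℝ (Fin d) |
          dist p.1 p.2 < ε}
        ≤ ENNReal.ofReal (C * ε ^ rt)) :
    ∀ r : ℝ, 1 ≤ r → r < rt → sInf (capacitySet r ν) = 0 := by
  intro r hr hrlt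
  obtain ⟨K, hK0, hK⟩ := transition_deriv_bound
  have hr0 : (0:ℝ) < r := lt_of_lt_of_le one_pos hr
  set μ := ν.prod ν
  -- Step 1: for every ε > 0, the capacity is at most the energy of the cutoff
  have key : ∀ ε : ℝ, 0 < ε →
      sInf (capacitySet r ν) ≤
        ENNReal.ofReal ((1 + (3*K/(2*ε)) ^ r) * (C * (4*ε) ^ rt)) := by
    intro ε hε
    set M := 3*K/(2*ε) with hM
    have hM0 : 0 ≤ M := by positivity
    set h := cutoff (d := d) ε with hh
    -- energy is in the capacity set
    have hmem : (∫⁻ p, (ENNReal.ofReal (|h p| ^ r)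
        + ENNReal.ofReal (‖fderiv ℝ h p‖ ^ r)) ∂μ) ∈ capacitySet r ν := by
      refine ⟨h, cutoff_contDiff ε, ⟨max 1 M, fun p => ⟨?_, ?_⟩⟩,
        cutoff_diag ε hε, cutoff_le_one ε, rfl⟩
      · rw [abs_of_nonneg (cutoff_nonneg ε p)]
        exact le_trans (cutoff_le_one ε p) (le_max_left _ _)
      · exact le_trans (cutoff_fderiv_global ε K hε hK p) (le_max_right _ _)
    refine le_trans (sInf_le hmem) ?_
    -- bound the energy
    set S := {p : EuclideanSpace ℝ (Fin d) × EuclideanSpace ℝ (Fin d) | dist p.1 p.2 ≤ 3*ε}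
      with hS
    have hSmeas : MeasurableSet S :=
      (isClosed_le ((continuous_fst.dist continuous_snd)) continuous_const).measurableSet
    have hptwise : ∀ p, (ENNReal.ofReal (|h p| ^ r)
        + ENNReal.ofReal (‖fderiv ℝ h p‖ ^ r))
        ≤ S.indicator (fun _ => ENNReal.ofReal (1 + M ^ r)) p := by
      intro p
      simp only [hh]
      rcases le_or_gt (dist p.1 p.2) (3*ε) with hd | hd
      · rw [Set.indicator_of_mem (show p ∈ S from hd)]
        have h1 : |h p| ^ r ≤ 1 := by
          apply Real.rpow_le_one (abs_nonneg _) _ (le_of_lt hr0)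
          rw [abs_of_nonneg (cutoff_nonneg ε p)]
          exact cutoff_le_one ε p
        have h2 : ‖fderiv ℝ h p‖ ^ r ≤ M ^ r := by
          apply Real.rpow_le_rpow (norm_nonneg _) _ (le_of_lt hr0)
          have := cutoff_fderiv_norm_le ε K hε hK p
          rw [dist_eq_norm] at hd
          refine le_trans this ?_
          rw [hM, div_le_div_iff₀ (by positivity) (by positivity)]
          nlinarith [mul_le_mul_of_nonneg_left hd hK0, hε, norm_nonneg (p.1 - p.2)]
        rw [ENNReal.ofReal_add zero_le_one (Real.rpow_nonneg hM0 r)]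
        exact add_le_add (by simpa using ENNReal.ofReal_le_ofReal h1)
          (ENNReal.ofReal_le_ofReal h2)
      · rw [Set.indicator_of_notMem (by simpa [hS] using not_le.mpr hd)]
        rw [cutoff_zero ε hε p (le_of_lt hd), cutoff_fderiv_zero ε hε p hd]
        simp [Real.zero_rpow (ne_of_gt hr0)]
    calc (∫⁻ p, (ENNReal.ofReal (|h p| ^ r) + ENNReal.ofReal (‖fderiv ℝ h p‖ ^ r)) ∂μ)
        ≤ ∫⁻ p, S.indicator (fun _ => ENNReal.ofReal (1 + M ^ r)) p ∂μ :=
          lintegral_mono hptwise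
      _ = ENNReal.ofReal (1 + M ^ r) * μ S := lintegral_indicator_const hSmeas _
      _ ≤ ENNReal.ofReal (1 + M ^ r) * ENNReal.ofReal (C * (4*ε) ^ rt) := by
          apply mul_le_mul_right (le_trans (measure_mono ?_) (hstrip (4*ε) (by positivity)))
          intro p hp
          simp only [hS, Set.mem_setOf_eq] at hp ⊢
          linarith
      _ = ENNReal.ofReal ((1 + M ^ r) * (C * (4*ε) ^ rt)) :=
          (ENNReal.ofReal_mul (by positivity)).symm
  -- Step 2: the bound tends to 0 as ε → 0⁺
  have htend : Filter.Tendsto (fun ε : ℝ => (1 + (3*K/(2*ε)) ^ r) * (C * (4*ε) ^ rt))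
      (nhdsWithin 0 (Set.Ioi 0)) (nhds 0) := by
    have heq : ∀ ε ∈ Set.Ioi (0:ℝ), (1 + (3*K/(2*ε)) ^ r) * (C * (4*ε) ^ rt)
        = C * 4 ^ rt * ε ^ rt + (3*K/2) ^ r * (C * 4 ^ rt) * ε ^ (rt - r) := by
      intro ε hε
      have hε' : (0:ℝ) < ε := hε
      have e1 : (3*K/(2*ε)) ^ r = (3*K/2) ^ r * (ε ^ r)⁻¹ := by
        rw [show 3*K/(2*ε) = (3*K/2) * ε⁻¹ by field_simp,
          Real.mul_rpow (by positivity) (by positivity), Real.inv_rpow (le_of_lt hε')]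
      have e2 : (4*ε) ^ rt = 4 ^ rt * ε ^ rt :=
        Real.mul_rpow (by norm_num) (le_of_lt hε')
      have e3 : (ε ^ r)⁻¹ * ε ^ rt = ε ^ (rt - r) := by
        rw [← Real.rpow_neg (le_of_lt hε'), ← Real.rpow_add hε']
        ring_nf
      rw [e1, e2]
      calc (1 + (3*K/2) ^ r * (ε ^ r)⁻¹) * (C * (4 ^ rt * ε ^ rt))
          = C * 4 ^ rt * ε ^ rt + (3*K/2) ^ r * (C * 4 ^ rt) * ((ε ^ r)⁻¹ * ε ^ rt) := by ring
        _ = _ := by rw [e3]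
    have h1 : Filter.Tendsto (fun ε : ℝ => ε ^ rt) (nhdsWithin 0 (Set.Ioi 0)) (nhds 0) := by
      have := (Real.continuousAt_rpow_const 0 rt (Or.inr (by linarith))).tendsto
      rw [Real.zero_rpow (by linarith : rt ≠ 0)] at this
      exact this.mono_left nhdsWithin_le_nhds
    have h2 : Filter.Tendsto (fun ε : ℝ => ε ^ (rt - r)) (nhdsWithin 0 (Set.Ioi 0)) (nhds 0) := by
      have := (Real.continuousAt_rpow_const 0 (rt - r) (Or.inr (by linarith))).tendsto
      rw [Real.zero_rpow (by linarith : rt - r ≠ 0)] at this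
      exact this.mono_left nhdsWithin_le_nhds
    have := ((h1.const_mul (C * 4 ^ rt)).add (h2.const_mul ((3*K/2) ^ r * (C * 4 ^ rt))))
    simp only [mul_zero, add_zero] at this
    exact Filter.Tendsto.congr' (Filter.eventuallyEq_of_mem self_mem_nhdsWithin
      (fun ε hε => (heq ε hε).symm)) this
  -- Step 3: conclude
  refine le_antisymm ?_ zero_le
  apply ENNReal.le_of_forall_pos_le_add
  intro δ hδ _
  have hδ' : (0:ℝ) < (δ:ℝ) := by exact_mod_cast hδ
  have hev : ∀ᶠ ε in nhdsWithin (0:ℝ) (Set.Ioi 0),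
      (1 + (3*K/(2*ε)) ^ r) * (C * (4*ε) ^ rt) < (δ:ℝ) :=
    htend.eventually (gt_mem_nhds hδ')
  obtain ⟨ε, hlt, hε⟩ := (hev.and self_mem_nhdsWithin).exists
  calc sInf (capacitySet r ν)
      ≤ ENNReal.ofReal ((1 + (3*K/(2*ε)) ^ r) * (C * (4*ε) ^ rt)) := key ε hε
    _ ≤ (δ : ℝ≥0∞) := by
        refine le_trans (ENNReal.ofReal_le_ofReal hlt.le) ?_
        rw [ENNReal.ofReal_coe_nnreal]
    _ = 0 + δ := (zero_add _).symm
end
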